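/- Let $n \ge 2$, $0 < p \le 1$, $\beta > 0$ with $p(n+\beta) > n$, and let $T$ be a sublinear operator bounded on $L^4(\mathbb{R}^n)$ such that for every $(p,\infty,s)$-atom $a$ supported in a ball $B(x_0, r)$ one has $|T a(x)| \le C \|a\|_{L^\infty} r^{n+\beta} |x - x_0|^{-(n+\beta)}$ for all $x \notin 64B$. Then there is a constant $C'$ such that $\|T a\|_{L^p(\mathbb{R}^n)} \le C'$ uniformly over all $(p,\infty,s)$-atoms $a$. -/

import Mathlib

open MeasureTheory Metric

/-- A `(p, ∞, s)`-atom associated with the ball `B(x₀, r)`. -/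
def IsPInftyAtom (n : ℕ) (p : ℝ) (s : ℕ) (a : EuclideanSpace ℝ (Fin n) → ℝ)
    (x0 : EuclideanSpace ℝ (Fin n)) (r : ℝ) : Prop :=
  0 < r ∧ Measurable a ∧
  (∀ x, x ∉ ball x0 r → a x = 0) ∧
  (∀ x, |a x| ≤ (volume (ball x0 r)).toReal ^ (-(1 / p))) ∧
  (∀ m : Fin n → ℕ, (∑ i, m i) ≤ s →
    ∫ x, a x * ∏ i, (x i) ^ (m i) = 0)

open scoped ENNReal NNReal

/-! Split `‖Ta‖_p^p` at the ball `B(x₀, 64r)`. On that ball, Hölder's inequality with exponents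
`4/p` and `(1 - p/4)⁻¹` and the `L⁴` bound give `‖Ta‖_p ≤ A ‖a‖_4 |64B|^{1/p - 1/4}`, and the
normalisation `‖a‖_∞ ≤ |B|^{-1/p}` makes every power of `|B|` cancel. Off that ball the decay
hypothesis bounds `|Ta|^p` by `C^p |B|^{-1} r^{p(n+β)} |x - x₀|^{-p(n+β)}`; summing over dyadic
annuli, `|x - x₀|^{-Q}` has integral `≲ R^{n-Q}` outside a ball of radius `R` as soon as `Q > n`,
and with `Q = p(n+β) > n`, `R = 64r` the powers of `r` cancel as well. -/

lemma compl_ball_subset_iUnion_dyadic_annuli {α : Type*} [PseudoMetricSpace α] (x0 : α) {R : ℝ}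
    (hR : 0 < R) :
    (ball x0 R)ᶜ ⊆ ⋃ k : ℕ, ball x0 (2 ^ (k + 1) * R) \ ball x0 (2 ^ k * R) := by
  intro x hx
  have hxR : 1 ≤ dist x x0 / R := by
    rw [le_div_iff₀ hR, one_mul]
    simpa using hx
  obtain ⟨k, hk, hk'⟩ := exists_nat_pow_near hxR one_lt_two
  refine Set.mem_iUnion.2 ⟨k, ?_, ?_⟩
  · rwa [mem_ball, ← div_lt_iff₀ hR]
  · rwa [mem_ball, not_lt, ← le_div_iff₀ hR]

section DyadicTail

variable {E : Type*} [NormedAddCommGroup E] [NormedSpace ℝ E] [FiniteDimensional ℝ E]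
  [MeasurableSpace E] [BorelSpace E] (μ : Measure E) [μ.IsAddHaarMeasure]

open Module

lemma setLIntegral_dyadic_annulus_dist_rpow_neg_le (x0 : E) {R Q : ℝ} (hR : 0 < R)
    (hQ : 0 ≤ Q) (k : ℕ) :
    ∫⁻ x in ball x0 (2 ^ (k + 1) * R) \ ball x0 (2 ^ k * R), ENNReal.ofReal (dist x x0 ^ (-Q)) ∂μ
      ≤ 2 ^ finrank ℝ E * μ (ball 0 1) * ENNReal.ofReal (R ^ ((finrank ℝ E : ℝ) - Q)) *
        ENNReal.ofReal (2 ^ ((finrank ℝ E : ℝ) - Q)) ^ k := by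
  set d := finrank ℝ E
  set ρ : ℝ := 2 ^ k * R with hρ
  have hρ0 : 0 < ρ := by positivity
  have hscale :
      ρ ^ (-Q) * (2 * ρ) ^ d = 2 ^ d * (R ^ ((d : ℝ) - Q) * (2 ^ ((d : ℝ) - Q)) ^ k) := by
    rw [mul_pow, mul_left_comm, ← Real.rpow_natCast ρ d, ← Real.rpow_add hρ0, neg_add_eq_sub,
      hρ, Real.mul_rpow (by positivity) hR.le, ← Real.rpow_pow_comm zero_le_two, mul_comm (R ^ _)]
  calc ∫⁻ x in ball x0 (2 ^ (k + 1) * R) \ ball x0 ρ, ENNReal.ofReal (dist x x0 ^ (-Q)) ∂μ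
      ≤ ∫⁻ _ in ball x0 (2 ^ (k + 1) * R) \ ball x0 ρ, ENNReal.ofReal (ρ ^ (-Q)) ∂μ := by
        refine setLIntegral_mono measurable_const fun x hx => ?_
        have hρx : ρ ≤ dist x x0 := by simpa using hx.2
        exact ENNReal.ofReal_le_ofReal (Real.rpow_le_rpow_of_nonpos hρ0 hρx (neg_nonpos.2 hQ))
    _ ≤ ENNReal.ofReal (ρ ^ (-Q)) * μ (ball x0 (2 * ρ)) := by
        rw [setLIntegral_const, pow_succ', mul_assoc]
        gcongr
        exact Set.sdiff_subset
    _ = _ := by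
        rw [Measure.addHaar_ball_of_pos μ x0 (by positivity), ← mul_assoc,
          ← ENNReal.ofReal_mul (by positivity), hscale, ENNReal.ofReal_mul (by positivity),
          ENNReal.ofReal_mul (by positivity), ENNReal.ofReal_pow zero_le_two,
          ENNReal.ofReal_pow (by positivity), ENNReal.ofReal_ofNat]
        ring

theorem exists_setLIntegral_compl_ball_dist_rpow_neg_le {Q : ℝ} (hQ : (finrank ℝ E : ℝ) < Q) :
    ∃ c : ℝ≥0, ∀ (x0 : E) {R : ℝ}, 0 < R →
      ∫⁻ x in (ball x0 R)ᶜ, ENNReal.ofReal (dist x x0 ^ (-Q)) ∂μ ≤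
        c * ENNReal.ofReal (R ^ ((finrank ℝ E : ℝ) - Q)) := by
  set d := finrank ℝ E
  set w := ENNReal.ofReal (2 ^ ((d : ℝ) - Q))
  have hw : w < 1 :=
    ENNReal.ofReal_lt_one.2 (Real.rpow_lt_one_of_one_lt_of_neg one_lt_two (by linarith))
  have hc : 2 ^ d * μ (ball 0 1) * (1 - w)⁻¹ ≠ ⊤ :=
    ENNReal.mul_ne_top (ENNReal.mul_ne_top (by simp) measure_ball_lt_top.ne)
      (ENNReal.inv_ne_top.2 (tsub_pos_of_lt hw).ne')
  refine ⟨(2 ^ d * μ (ball 0 1) * (1 - w)⁻¹).toNNReal, fun x0 R hR => ?_⟩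
  have hQ0 : 0 ≤ Q := le_trans (Nat.cast_nonneg _) hQ.le
  calc ∫⁻ x in (ball x0 R)ᶜ, ENNReal.ofReal (dist x x0 ^ (-Q)) ∂μ
      ≤ ∫⁻ x in ⋃ k : ℕ, ball x0 (2 ^ (k + 1) * R) \ ball x0 (2 ^ k * R),
          ENNReal.ofReal (dist x x0 ^ (-Q)) ∂μ :=
        lintegral_mono_set (compl_ball_subset_iUnion_dyadic_annuli x0 hR)
    _ ≤ ∑' k : ℕ, ∫⁻ x in ball x0 (2 ^ (k + 1) * R) \ ball x0 (2 ^ k * R),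
          ENNReal.ofReal (dist x x0 ^ (-Q)) ∂μ :=
        lintegral_iUnion_le _ _
    _ ≤ ∑' k : ℕ, 2 ^ d * μ (ball 0 1) * ENNReal.ofReal (R ^ ((d : ℝ) - Q)) * w ^ k :=
        ENNReal.tsum_le_tsum fun k => setLIntegral_dyadic_annulus_dist_rpow_neg_le μ x0 hR hQ0 k
    _ = _ := by
        rw [ENNReal.tsum_mul_left, ENNReal.tsum_geometric, ENNReal.coe_toNNReal hc]
        ring

end DyadicTail

section LpSplitting

variable {α F : Type*} [MeasurableSpace α] [NormedAddCommGroup F] {μ : Measure α}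

lemma eLpNorm_ofReal_rpow_eq_lintegral {p : ℝ} (hp : 0 < p) (f : α → F) :
    eLpNorm f (ENNReal.ofReal p) μ ^ p = ∫⁻ x, ‖f x‖ₑ ^ p ∂μ := by
  rw [eLpNorm_eq_eLpNorm' (by simpa using hp) ENNReal.ofReal_ne_top, ENNReal.toReal_ofReal hp.le,
    lintegral_rpow_enorm_eq_rpow_eLpNorm' hp]

lemma eLpNorm_ofReal_rpow_eq_restrict_add_restrict_compl {p : ℝ} (hp : 0 < p) (f : α → F)
    {s : Set α} (hs : MeasurableSet s) :
    eLpNorm f (ENNReal.ofReal p) μ ^ p =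
      eLpNorm f (ENNReal.ofReal p) (μ.restrict s) ^ p +
        eLpNorm f (ENNReal.ofReal p) (μ.restrict sᶜ) ^ p := by
  simp only [eLpNorm_ofReal_rpow_eq_lintegral hp]
  exact (lintegral_add_compl _ hs).symm

lemma eLpNorm_restrict_le_eLpNorm_mul_rpow_measure {p q : ℝ≥0∞} (hpq : p ≤ q) {f : α → F}
    (hf : AEStronglyMeasurable f μ) (s : Set α) :
    eLpNorm f p (μ.restrict s) ≤ eLpNorm f q μ * μ s ^ (1 / p.toReal - 1 / q.toReal) := by
  have := eLpNorm_le_eLpNorm_mul_rpow_measure_univ hpq (hf.restrict (s := s))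
  rw [Measure.restrict_apply_univ] at this
  exact this.trans (mul_le_mul_left (eLpNorm_restrict_le f q μ s) _)

end LpSplitting

section Decay

variable {E F : Type*} [NormedAddCommGroup E] [NormedSpace ℝ E] [FiniteDimensional ℝ E]
  [MeasurableSpace E] [BorelSpace E] (μ : Measure E) [μ.IsAddHaarMeasure] [NormedAddCommGroup F]

open Module

theorem exists_eLpNorm_restrict_compl_ball_rpow_le_of_decay {p γ : ℝ} (hp : 0 < p)
    (hpγ : (finrank ℝ E : ℝ) < p * γ) :
    ∃ c : ℝ≥0, ∀ (f : E → F) (x0 : E) {R D : ℝ}, 0 < R → 0 ≤ D →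
      (∀ x ∉ ball x0 R, ‖f x‖ ≤ D * dist x x0 ^ (-γ)) →
      eLpNorm f (ENNReal.ofReal p) (μ.restrict (ball x0 R)ᶜ) ^ p ≤
        c * ENNReal.ofReal (D ^ p * R ^ ((finrank ℝ E : ℝ) - p * γ)) := by
  obtain ⟨c, hc⟩ := exists_setLIntegral_compl_ball_dist_rpow_neg_le μ hpγ
  refine ⟨c, fun f x0 R D hR hD hf => ?_⟩
  have hpointwise : ∀ x ∈ (ball x0 R)ᶜ,
      ‖f x‖ₑ ^ p ≤ ENNReal.ofReal (D ^ p) * ENNReal.ofReal (dist x x0 ^ (-(p * γ))) := by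
    intro x hx
    have hdist := dist_nonneg (x := x) (y := x0)
    calc ‖f x‖ₑ ^ p ≤ ENNReal.ofReal (D * dist x x0 ^ (-γ)) ^ p := by
          rw [← ofReal_norm]
          gcongr
          exact hf x hx
      _ = ENNReal.ofReal (D ^ p) * ENNReal.ofReal (dist x x0 ^ (-(p * γ))) := by
          rw [ENNReal.ofReal_rpow_of_nonneg (by positivity) hp.le,
            Real.mul_rpow hD (by positivity), ← Real.rpow_mul hdist,
            ENNReal.ofReal_mul (by positivity), show -γ * p = -(p * γ) by ring]
  calc eLpNorm f (ENNReal.ofReal p) (μ.restrict (ball x0 R)ᶜ) ^ p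
      = ∫⁻ x in (ball x0 R)ᶜ, ‖f x‖ₑ ^ p ∂μ := eLpNorm_ofReal_rpow_eq_lintegral hp f
    _ ≤ ∫⁻ x in (ball x0 R)ᶜ,
          ENNReal.ofReal (D ^ p) * ENNReal.ofReal (dist x x0 ^ (-(p * γ))) ∂μ :=
        setLIntegral_mono' measurableSet_ball.compl hpointwise
    _ = ENNReal.ofReal (D ^ p) *
          ∫⁻ x in (ball x0 R)ᶜ, ENNReal.ofReal (dist x x0 ^ (-(p * γ))) ∂μ :=
        lintegral_const_mul' _ _ ENNReal.ofReal_ne_top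
    _ ≤ ENNReal.ofReal (D ^ p) * (c * ENNReal.ofReal (R ^ ((finrank ℝ E : ℝ) - p * γ))) := by
        gcongr
        exact hc x0 hR
    _ = _ := by
        rw [ENNReal.ofReal_mul (by positivity)]
        ring

end Decay

namespace IsPInftyAtom

variable {n : ℕ} {p : ℝ} {s : ℕ} {a : EuclideanSpace ℝ (Fin n) → ℝ}
  {x0 : EuclideanSpace ℝ (Fin n)} {r : ℝ}

lemma eLpNorm_le (ha : IsPInftyAtom n p s a x0 r) (q : ℝ≥0∞) :
    eLpNorm a q volume ≤ volume (ball x0 r) ^ q.toReal⁻¹ * volume (ball x0 r) ^ (-(1 / p)) := by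
  have hsupp : Function.support a ⊆ ball x0 r := fun x hx => by_contra fun h => hx (ha.2.2.1 x h)
  have := eLpNorm_le_of_ae_bound (p := q) (f := a)
    (ae_of_all (volume.restrict (ball x0 r)) ha.2.2.2.1)
  rwa [Measure.restrict_apply_univ, ENNReal.toReal_rpow, ENNReal.ofReal_toReal
    (ENNReal.rpow_ne_top_of_ne_zero (measure_ball_pos volume x0 ha.1).ne' measure_ball_lt_top.ne),
    eLpNorm_restrict_eq_of_support_subset hsupp] at this

lemma memLp (ha : IsPInftyAtom n p s a x0 r) (q : ℝ≥0∞) : MemLp a q volume := by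
  have hB0 := (measure_ball_pos volume x0 ha.1).ne'
  have hBtop := (measure_ball_lt_top (μ := volume) (x := x0) (r := r)).ne
  refine ⟨ha.2.1.aestronglyMeasurable, (ha.eLpNorm_le q).trans_lt ?_⟩
  exact ENNReal.mul_lt_top (ENNReal.rpow_ne_top_of_ne_zero hB0 hBtop).lt_top
    (ENNReal.rpow_ne_top_of_ne_zero hB0 hBtop).lt_top

lemma toReal_eLpNorm_top_le (ha : IsPInftyAtom n p s a x0 r) :
    (eLpNorm a ⊤ volume).toReal ≤ (volume (ball x0 r)).toReal ^ (-(1 / p)) := by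
  refine ENNReal.toReal_le_of_le_ofReal (by positivity) ?_
  rw [eLpNorm_exponent_top]
  exact eLpNormEssSup_le_of_ae_bound (f := a) (ae_of_all _ ha.2.2.2.1)

lemma eLpNorm_restrict_ball_le_of_eLpNorm_le (ha : IsPInftyAtom n p s a x0 r) (hp : 0 < p)
    {q : ℝ≥0∞} (hpq : ENNReal.ofReal p ≤ q) {g : EuclideanSpace ℝ (Fin n) → ℝ}
    (hg : AEStronglyMeasurable g volume) {K : ℝ≥0∞}
    (hgK : eLpNorm g q volume ≤ K * eLpNorm a q volume) {t : ℝ} (ht : 0 < t) :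
    eLpNorm g (ENNReal.ofReal p) (volume.restrict (ball x0 (t * r))) ≤
      K * ENNReal.ofReal (t ^ n) ^ (1 / p - 1 / q.toReal) := by
  set V := volume (ball x0 r)
  have hV0 : V ≠ 0 := (measure_ball_pos volume x0 ha.1).ne'
  have hVtop : V ≠ ⊤ := measure_ball_lt_top.ne
  have hball : volume (ball x0 (t * r)) = ENNReal.ofReal (t ^ n) * V := by
    rw [Measure.addHaar_ball_mul_of_pos volume x0 ht, finrank_euclideanSpace_fin,
      ← Measure.addHaar_ball_center]
  have hcancel : V ^ q.toReal⁻¹ * V ^ (-(1 / p)) * V ^ (1 / p - 1 / q.toReal) = 1 := by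
    rw [← ENNReal.rpow_add _ _ hV0 hVtop, ← ENNReal.rpow_add _ _ hV0 hVtop, one_div (q.toReal),
      show q.toReal⁻¹ + -(1 / p) + (1 / p - q.toReal⁻¹) = 0 by ring, ENNReal.rpow_zero]
  calc eLpNorm g (ENNReal.ofReal p) (volume.restrict (ball x0 (t * r)))
      ≤ eLpNorm g q volume * volume (ball x0 (t * r)) ^ (1 / p - 1 / q.toReal) := by
        simpa [ENNReal.toReal_ofReal hp.le] using
          eLpNorm_restrict_le_eLpNorm_mul_rpow_measure hpq hg (ball x0 (t * r))
    _ ≤ K * (V ^ q.toReal⁻¹ * V ^ (-(1 / p))) *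
          (ENNReal.ofReal (t ^ n) * V) ^ (1 / p - 1 / q.toReal) := by
        rw [hball]
        gcongr
        exact hgK.trans (by gcongr; exact ha.eLpNorm_le q)
    _ = K * ENNReal.ofReal (t ^ n) ^ (1 / p - 1 / q.toReal) *
          (V ^ q.toReal⁻¹ * V ^ (-(1 / p)) * V ^ (1 / p - 1 / q.toReal)) := by
        rw [ENNReal.mul_rpow_of_ne_top ENNReal.ofReal_ne_top hVtop]
        ring
    _ = K * ENNReal.ofReal (t ^ n) ^ (1 / p - 1 / q.toReal) := by rw [hcancel, mul_one]

theorem exists_eLpNorm_restrict_compl_ball_rpow_le (hp : 0 < p) {γ : ℝ}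
    (hpγ : (n : ℝ) < p * γ) {C t : ℝ} (hC : 0 ≤ C) (ht : 0 < t) :
    ∃ c : ℝ≥0, ∀ a x0 r, IsPInftyAtom n p s a x0 r → ∀ g : EuclideanSpace ℝ (Fin n) → ℝ,
      (∀ x ∉ ball x0 (t * r),
        |g x| ≤ C * (eLpNorm a ⊤ volume).toReal * r ^ γ * dist x x0 ^ (-γ)) →
      eLpNorm g (ENNReal.ofReal p) (volume.restrict (ball x0 (t * r))ᶜ) ^ p ≤ c := by
  set v := (volume (ball (0 : EuclideanSpace ℝ (Fin n)) 1)).toReal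
  obtain ⟨c, hc⟩ := exists_eLpNorm_restrict_compl_ball_rpow_le_of_decay (F := ℝ)
    (volume : Measure (EuclideanSpace ℝ (Fin n))) hp (by simpa using hpγ)
  refine ⟨c * (C ^ p * t ^ ((n : ℝ) - p * γ) / v).toNNReal, fun a x0 r ha g hg => ?_⟩
  set M := (volume (ball x0 r)).toReal ^ (-(1 / p))
  have hr := ha.1
  have hdecay : ∀ x ∉ ball x0 (t * r), ‖g x‖ ≤ C * M * r ^ γ * dist x x0 ^ (-γ) := fun x hx =>
    (hg x hx).trans (by gcongr; exact ha.toReal_eLpNorm_top_le)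
  have hV : (volume (ball x0 r)).toReal = r ^ n * v := by
    rw [Measure.addHaar_ball_of_pos volume x0 hr, finrank_euclideanSpace_fin, ENNReal.toReal_mul,
      ENNReal.toReal_ofReal (by positivity)]
  have hMp : M ^ p = (r ^ n * v)⁻¹ := by
    rw [← Real.rpow_mul ENNReal.toReal_nonneg, show -(1 / p) * p = -1 by field_simp,
      Real.rpow_neg_one, hV]
  have hv : 0 < v := ENNReal.toReal_pos (measure_ball_pos _ _ one_pos).ne' measure_ball_lt_top.ne
  have hscale : (C * M * r ^ γ) ^ p * (t * r) ^ ((n : ℝ) - p * γ) =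
      C ^ p * t ^ ((n : ℝ) - p * γ) / v := by
    calc (C * M * r ^ γ) ^ p * (t * r) ^ ((n : ℝ) - p * γ)
        = C ^ p * M ^ p * t ^ ((n : ℝ) - p * γ) * (r ^ (γ * p) * r ^ ((n : ℝ) - p * γ)) := by
          rw [Real.mul_rpow (by positivity) (by positivity), Real.mul_rpow hC (by positivity),
            ← Real.rpow_mul hr.le, Real.mul_rpow ht.le hr.le]
          ring
      _ = C ^ p * t ^ ((n : ℝ) - p * γ) / v := by
          rw [← Real.rpow_add hr, show γ * p + ((n : ℝ) - p * γ) = n by ring, Real.rpow_natCast,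
            hMp]
          field_simp
  calc eLpNorm g (ENNReal.ofReal p) (volume.restrict (ball x0 (t * r))ᶜ) ^ p
      ≤ c * ENNReal.ofReal ((C * M * r ^ γ) ^ p * (t * r) ^ ((n : ℝ) - p * γ)) := by
        simpa using hc g x0 (by positivity) (by positivity) hdecay
    _ = ↑(c * (C ^ p * t ^ ((n : ℝ) - p * γ) / v).toNNReal) := by
        rw [hscale, ENNReal.coe_mul]
        rfl

end IsPInftyAtom

theorem stmt_16_general (n : ℕ) (p β : ℝ) (hp : 0 < p) (hp1 : p ≤ 1)
    (hpn : (n : ℝ) < p * ((n : ℝ) + β)) (s : ℕ)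
    (T : (EuclideanSpace ℝ (Fin n) → ℝ) → EuclideanSpace ℝ (Fin n) → ℝ)
    (hTmeas : ∀ f, Measurable (T f))
    (A : ℝ)
    (hTL4 : ∀ f, MemLp f 4 volume →
      eLpNorm (T f) 4 volume ≤ ENNReal.ofReal A * eLpNorm f 4 volume)
    (C : ℝ) (hC : 0 < C)
    (hdecay : ∀ a x0 r, IsPInftyAtom n p s a x0 r →
      ∀ x, x ∉ ball x0 (64 * r) →
        |T a x| ≤ C * (eLpNorm a ⊤ volume).toReal * r ^ ((n : ℝ) + β) *
          (dist x x0) ^ (-((n : ℝ) + β))) :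
    ∃ C' : ℝ, 0 < C' ∧ ∀ a x0 r, IsPInftyAtom n p s a x0 r →
      eLpNorm (T a) (ENNReal.ofReal p) volume ≤ ENNReal.ofReal C' := by
  obtain ⟨c, hfar⟩ := IsPInftyAtom.exists_eLpNorm_restrict_compl_ball_rpow_le (s := s) hp hpn
    hC.le (by norm_num : (0 : ℝ) < 64)
  set N := ENNReal.ofReal A * ENNReal.ofReal (64 ^ n) ^ (1 / p - 1 / (4 : ℝ≥0∞).toReal)
  have hN : N ≠ ⊤ := ENNReal.mul_ne_top ENNReal.ofReal_ne_top
    (ENNReal.rpow_ne_top_of_ne_zero (by simp) ENNReal.ofReal_ne_top)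
  have hK : (N ^ p + c) ^ (1 / p) ≠ ⊤ := ENNReal.rpow_ne_top_of_nonneg (by positivity)
    (ENNReal.add_ne_top.2 ⟨ENNReal.rpow_ne_top_of_nonneg hp.le hN, ENNReal.coe_ne_top⟩)
  refine ⟨((N ^ p + c) ^ (1 / p)).toReal + 1, by positivity, fun a x0 r ha => ?_⟩
  have hnear := ha.eLpNorm_restrict_ball_le_of_eLpNorm_le hp (q := 4)
    (by simpa using hp1.trans (by norm_num))
    (hTmeas a).aestronglyMeasurable (hTL4 a (ha.memLp 4)) (by norm_num : (0 : ℝ) < 64)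
  calc eLpNorm (T a) (ENNReal.ofReal p) volume
      = (eLpNorm (T a) (ENNReal.ofReal p) volume ^ p) ^ (1 / p) := by
        rw [← ENNReal.rpow_mul, mul_one_div_cancel hp.ne', ENNReal.rpow_one]
    _ ≤ (N ^ p + c) ^ (1 / p) := by
        rw [eLpNorm_ofReal_rpow_eq_restrict_add_restrict_compl hp _ measurableSet_ball]
        gcongr
        exact hfar a x0 r ha (T a) (hdecay a x0 r ha)
    _ ≤ ENNReal.ofReal (((N ^ p + c) ^ (1 / p)).toReal + 1) :=
        (ENNReal.ofReal_toReal hK).symm.le.trans (ENNReal.ofReal_le_ofReal (by linarith))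

theorem stmt_16 (n : ℕ) (hn : 2 ≤ n) (p β : ℝ) (hp : 0 < p) (hp1 : p ≤ 1) (hβ : 0 < β)
    (hpn : (n : ℝ) < p * ((n : ℝ) + β)) (s : ℕ) (hs : (⌊(n : ℝ) * (1 / p - 1)⌋ : ℤ) ≤ s)
    (T : (EuclideanSpace ℝ (Fin n) → ℝ) → EuclideanSpace ℝ (Fin n) → ℝ)
    (hTmeas : ∀ f, Measurable (T f))
    (hTsub : ∀ f g x, |T (f + g) x| ≤ |T f x| + |T g x|)
    (A : ℝ) (hA : 0 < A)
    (hTL4 : ∀ f, MemLp f 4 volume →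
      eLpNorm (T f) 4 volume ≤ ENNReal.ofReal A * eLpNorm f 4 volume)
    (C : ℝ) (hC : 0 < C)
    (hdecay : ∀ a x0 r, IsPInftyAtom n p s a x0 r →
      ∀ x, x ∉ ball x0 (64 * r) →
        |T a x| ≤ C * (eLpNorm a ⊤ volume).toReal * r ^ ((n : ℝ) + β) *
          (dist x x0) ^ (-((n : ℝ) + β))) :
    ∃ C' : ℝ, 0 < C' ∧ ∀ a x0 r, IsPInftyAtom n p s a x0 r →
      eLpNorm (T a) (ENNReal.ofReal p) volume ≤ ENNReal.ofReal C' :=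
  stmt_16_general n p β hp hp1 hpn s T hTmeas A hTL4 C hC hdecay
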